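/- arXiv:1810.11323 — 6 statements merged into one kernel-verified Lean document; each statement's English description precedes it below -/
import Mathlib

section
/- Let {M_1,...,M_m} be an irreducible set of n×n nonnegative matrices such that every matrix of the set dominates a permutation matrix (i.e., for each t there is a permutation matrix Q_t with M_t[i,j] ≥ Q_t[i,j] for all i,j). If the set has a block-permutation structure on a partition Ω = Ω_1 ∪ ... ∪ Ω_k of {1,...,n} with k ≥ 2, then all the blocks Ω_1,...,Ω_k have the same cardinality. -/
open Matrix

/-- The permutation matrix (over `ℝ`) of a permutation `σ`:
entry `(i, j)` equals `1` if `σ i = j` and `0` otherwise. -/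
def permMatR {n : ℕ} (σ : Equiv.Perm (Fin n)) : Matrix (Fin n) (Fin n) ℝ :=
  Matrix.of fun i j => if σ i = j then 1 else 0

/-- Let `{M 0, ..., M (m-1)}` be an irreducible set of `n × n` nonnegative matrices each of
which dominates a permutation matrix.  If the set has a block-permutation structure on a
partition `Ω 0 ∪ ... ∪ Ω (k-1)` of `{1,...,n}` with `k ≥ 2` (nonempty pairwise disjoint blocks
covering everything), then all the blocks have the same cardinality. -/
theorem stmt0 {n m k : ℕ} (hm : 1 ≤ m) (hk : 2 ≤ k)
    (M : Fin m → Matrix (Fin n) (Fin n) ℝ)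
    (hpos : ∀ t i j, 0 ≤ M t i j)
    (hdom : ∀ t, ∃ σ : Equiv.Perm (Fin n), ∀ i j, permMatR σ i j ≤ M t i j)
    (hirr : ∀ a b : Fin n,
      Relation.ReflTransGen (fun u v => 0 < ∑ t, M t u v) a b)
    (Ω : Fin k → Finset (Fin n))
    (hne : ∀ l, (Ω l).Nonempty)
    (hdisj : ∀ l l', l ≠ l' → Disjoint (Ω l) (Ω l'))
    (hcov : ∀ i : Fin n, ∃ l, i ∈ Ω l)
    (hblock : ∀ t, ∃ σ : Equiv.Perm (Fin k),
      ∀ l, ∀ i ∈ Ω l, ∀ j, 0 < M t i j → j ∈ Ω (σ l)) :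
    ∀ l l', (Ω l).card = (Ω l').card := by
  classical
  have uniq : ∀ i l, i ∈ Ω l → ∀ l', i ∈ Ω l' → l = l' := by
    intro i l hl l' hl'
    by_contra h
    exact Finset.disjoint_left.mp (hdisj l l' h) hl hl'
  have key : ∀ t (π : Equiv.Perm (Fin k)),
      (∀ l, ∀ i ∈ Ω l, ∀ j, 0 < M t i j → j ∈ Ω (π l)) →
      ∀ l, (Ω l).card = (Ω (π l)).card := by
    intro t π hπ
    have hle : ∀ l, (Ω l).card ≤ (Ω (π l)).card := by
      intro l
      obtain ⟨σ, hσ⟩ := hdom t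
      apply Finset.card_le_card_of_injOn σ
      · intro i hi
        apply hπ l i hi
        have h1 := hσ i (σ i)
        simp [permMatR] at h1
        linarith
      · exact σ.injective.injOn
    intro l
    by_contra hne'
    have hlt : (Ω l).card < (Ω (π l)).card := lt_of_le_of_ne (hle l) hne'
    have hsum : ∑ a, (Ω a).card < ∑ a, (Ω (π a)).card :=
      Finset.sum_lt_sum (fun a _ => hle a) ⟨l, Finset.mem_univ l, hlt⟩
    have heq : ∑ a, (Ω (π a)).card = ∑ a, (Ω a).card :=
      Equiv.sum_comp π (fun a => (Ω a).card)
    omega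
  have step : ∀ u v, 0 < ∑ t, M t u v →
      ∀ lu lv, u ∈ Ω lu → v ∈ Ω lv → (Ω lu).card = (Ω lv).card := by
    intro u v hpos' lu lv hu hv
    have hex : ∃ t, 0 < M t u v := by
      by_contra h
      push_neg at h
      have : ∑ t, M t u v ≤ 0 := Finset.sum_nonpos (fun t _ => h t)
      linarith
    obtain ⟨t, ht⟩ := hex
    obtain ⟨π, hπ⟩ := hblock t
    have hv' : v ∈ Ω (π lu) := hπ lu u hu v ht
    have hlv : lv = π lu := uniq v lv hv (π lu) hv'
    rw [hlv]
    exact key t π hπ lu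
  have main : ∀ a b : Fin n,
      Relation.ReflTransGen (fun u v => 0 < ∑ t, M t u v) a b →
      ∀ la lb, a ∈ Ω la → b ∈ Ω lb → (Ω la).card = (Ω lb).card := by
    intro a b h
    induction h with
    | refl => intro la lb ha hb; rw [uniq a la ha lb hb]
    | tail h' hcb ih =>
      intro la lb ha hb
      rename_i c _
      obtain ⟨lc, hc⟩ := hcov c
      exact (ih la lc ha hc).trans (step c _ hcb lc lb hc hb)
  intro l l'
  obtain ⟨i, hi⟩ := hne l
  obtain ⟨j, hj⟩ := hne l'
  exact main i j (hirr i j) l l' hi hj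
end

section
/- Let m ≥ 2 be an integer, c ∈ ℝ, α > 0, and let p(n) ∈ [0,1] be a sequence such that p(n) ≤ (1−α)·(log n + c)/n for all sufficiently large n. Then the probability that B_m(n, p(n)) is primitive tends to 0 as n → ∞. -/
open Matrix Filter

/-- The 0/1 matrix (over `ℕ`) associated to a Boolean matrix of entries. -/
def toMat {n : ℕ} (b : Fin n → Fin n → Bool) : Matrix (Fin n) (Fin n) ℕ :=
  Matrix.of fun i j => if b i j then 1 else 0

open Classical in
/-- The probability that the random set `B_m(n, p)` of `m` independent random `n × n`
binary matrices, whose `m · n²` entries are i.i.d. Bernoulli(`p`), satisfies `E`. -/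
noncomputable def bernoulliProb (n m : ℕ) (p : ℝ)
    (E : (Fin m → Matrix (Fin n) (Fin n) ℕ) → Prop) : ℝ :=
  ∑ b : Fin m → Fin n → Fin n → Bool,
    if E (fun k => toMat (b k)) then
      ∏ k : Fin m, ∏ i : Fin n, ∏ j : Fin n, (if b k i j then p else 1 - p)
    else 0

/-- A set `{M 0, ..., M (m-1)}` of `n × n` matrices over `ℕ` is primitive if some nonempty
product of its elements (repetitions allowed) has all entries positive. -/
def IsPrimitive {n m : ℕ} (M : Fin m → Matrix (Fin n) (Fin n) ℕ) : Prop :=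
  ∃ w : List (Fin m), w ≠ [] ∧ ∀ i j, 0 < (w.map M).prod i j

/-! The first factor of a positive product has no zero row (look at the diagonal), so by the
union bound `B_m(n, p)` is primitive with probability at most
`m (1 - (1 - p)^n)^n ≤ m exp (-n (1 - p)^n)`. Since `log (1 - p) ≥ -p / (1 - p)` and `p → 0`,
the hypothesis on `p` gives `n (1 - p)^n ≥ n^δ e^{-(1-δ) c}` for some `δ > 0`, which tends to
infinity. -/

open Finset Real

section ProductWeights

variable {ι α : Type*} [Fintype ι]

def piWeight (w : α → ℝ) (x : ι → α) : ℝ := ∏ i, w (x i)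

lemma piWeight_nonneg {w : α → ℝ} (hw : ∀ a, 0 ≤ w a) (x : ι → α) : 0 ≤ piWeight w x :=
  prod_nonneg fun i _ => hw (x i)

variable [Fintype α] [DecidableEq ι]

/- The filter's decidability instance is a separate argument so that these lemmas rewrite
filters whose instance was synthesized for a concrete index type (`Nat.decidableForallFin`). -/
lemma sum_filter_forall_piWeight (w : α → ℝ) (P : ι → α → Prop) [∀ i, DecidablePred (P i)]
    [DecidablePred fun x : ι → α => ∀ i, P i (x i)] :
    ∑ x ∈ univ.filter fun x : ι → α => ∀ i, P i (x i), piWeight w x =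
      ∏ i, ∑ a with P i a, w a := by
  rw [prod_univ_sum]
  refine sum_congr ?_ fun _ _ => rfl
  ext x
  simp [Fintype.mem_piFinset]

lemma sum_filter_forall_piWeight_eq_pow (w : α → ℝ) (P : α → Prop) [DecidablePred P]
    [DecidablePred fun x : ι → α => ∀ i, P (x i)] :
    ∑ x ∈ univ.filter fun x : ι → α => ∀ i, P (x i), piWeight w x =
      (∑ a with P a, w a) ^ Fintype.card ι := by
  rw [sum_filter_forall_piWeight w fun _ => P, prod_const, card_univ]

lemma sum_piWeight {w : α → ℝ} (hw : ∑ a, w a = 1) : ∑ x : ι → α, piWeight w x = 1 := by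
  simpa [hw] using sum_filter_forall_piWeight_eq_pow (ι := ι) w fun _ => True

lemma sum_filter_apply_piWeight {w : α → ℝ} (hw : ∑ a, w a = 1) (k : ι) (P : α → Prop)
    [DecidablePred P] :
    ∑ x : ι → α with P (x k), piWeight w x = ∑ a with P a, w a := by
  have h := sum_filter_forall_piWeight w fun i a => i = k → P a
  simp only [forall_eq] at h
  rw [h, Fintype.prod_eq_single k fun i hi => by simpa [hi] using hw]
  simp

end ProductWeights

lemma sum_filter_le_sum_sum_filter {β ι : Type*} [Fintype ι] {s : Finset β} {f : β → ℝ}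
    (hf : ∀ b, 0 ≤ f b) {E : β → Prop} {Q : ι → β → Prop} [DecidablePred E]
    [∀ i, DecidablePred (Q i)] (h : ∀ b, E b → ∃ i, Q i b) :
    ∑ b ∈ s with E b, f b ≤ ∑ i, ∑ b ∈ s with Q i b, f b := by
  simp only [sum_filter]
  rw [sum_comm]
  refine sum_le_sum fun b _ => ?_
  split_ifs with hE
  · obtain ⟨i, hi⟩ := h b hE
    simpa [hi] using single_le_sum (f := fun i => if Q i b then f b else 0)
      (fun i _ => by split_ifs <;> simp [hf]) (mem_univ i)
  · exact sum_nonneg fun i _ => by split_ifs <;> simp [hf]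

lemma IsPrimitive.exists_forall_exists_ne_zero {n m : ℕ} {M : Fin m → Matrix (Fin n) (Fin n) ℕ}
    (h : IsPrimitive M) : ∃ k, ∀ i, ∃ j, M k i j ≠ 0 := by
  obtain ⟨_ | ⟨k, w⟩, hw, hpos⟩ := h
  · exact absurd rfl hw
  refine ⟨k, fun i => ?_⟩
  have hii := hpos i i
  rw [List.map_cons, List.prod_cons, Matrix.mul_apply] at hii
  obtain ⟨j, -, hj⟩ := exists_ne_zero_of_sum_ne_zero hii.ne'
  exact ⟨j, left_ne_zero_of_mul hj⟩

section Bernoulli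

variable {n m : ℕ} {p : ℝ}

def bernoulliWeight (p : ℝ) (b : Bool) : ℝ := if b then p else 1 - p

lemma sum_bernoulliWeight : ∑ b, bernoulliWeight p b = 1 := by
  simp [bernoulliWeight]

lemma bernoulliWeight_nonneg (hp0 : 0 ≤ p) (hp1 : p ≤ 1) (b : Bool) :
    0 ≤ bernoulliWeight p b := by
  cases b <;> simp [bernoulliWeight, hp0, hp1]

open Classical in
lemma bernoulliProb_eq_sum_filter (E : (Fin m → Matrix (Fin n) (Fin n) ℕ) → Prop) :
    bernoulliProb n m p E = ∑ b : Fin m → Fin n → Fin n → Bool with E (fun k => toMat (b k)),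
      piWeight (piWeight (piWeight (bernoulliWeight p))) b :=
  (sum_filter _ _).symm

lemma bernoulliProb_nonneg (hp0 : 0 ≤ p) (hp1 : p ≤ 1)
    (E : (Fin m → Matrix (Fin n) (Fin n) ℕ) → Prop) : 0 ≤ bernoulliProb n m p E := by
  rw [bernoulliProb_eq_sum_filter]
  exact sum_nonneg fun b _ => piWeight_nonneg (piWeight_nonneg (piWeight_nonneg
    (bernoulliWeight_nonneg hp0 hp1))) b

lemma sum_filter_exists_piWeight_bernoulliWeight :
    ∑ r : Fin n → Bool with ∃ j, r j = true, piWeight (bernoulliWeight p) r = 1 - (1 - p) ^ n := by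
  have hnone : ∑ r : Fin n → Bool with ∀ j, ¬r j = true, piWeight (bernoulliWeight p) r
      = (1 - p) ^ n := by
    rw [sum_filter_forall_piWeight_eq_pow _ fun b => ¬b = true]
    simp [sum_filter, bernoulliWeight]
  have hsplit := sum_filter_add_sum_filter_not univ (fun r : Fin n → Bool => ∃ j, r j = true)
    (piWeight (bernoulliWeight p))
  simp only [not_exists, hnone, sum_piWeight sum_bernoulliWeight] at hsplit
  linarith

lemma sum_filter_forall_exists_piWeight_bernoulliWeight :
    ∑ a : Fin n → Fin n → Bool with ∀ i, ∃ j, a i j = true,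
      piWeight (piWeight (bernoulliWeight p)) a = (1 - (1 - p) ^ n) ^ n := by
  rw [sum_filter_forall_piWeight_eq_pow _ fun r : Fin n → Bool => ∃ j, r j = true,
    sum_filter_exists_piWeight_bernoulliWeight, Fintype.card_fin]

lemma bernoulliProb_isPrimitive_le (hp0 : 0 ≤ p) (hp1 : p ≤ 1) :
    bernoulliProb n m p (fun M => IsPrimitive M) ≤ m * (1 - (1 - p) ^ n) ^ n := by
  have hw : ∀ a : Fin n → Fin n → Bool, 0 ≤ piWeight (piWeight (bernoulliWeight p)) a :=
    piWeight_nonneg (piWeight_nonneg (bernoulliWeight_nonneg hp0 hp1))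
  classical
  rw [bernoulliProb_eq_sum_filter]
  calc _ ≤ ∑ k : Fin m, ∑ b : Fin m → Fin n → Fin n → Bool with ∀ i, ∃ j, b k i j = true,
          piWeight (piWeight (piWeight (bernoulliWeight p))) b := by
        refine sum_filter_le_sum_sum_filter (piWeight_nonneg hw) fun b hb => ?_
        simpa [toMat] using hb.exists_forall_exists_ne_zero
    _ = ∑ _k : Fin m, (1 - (1 - p) ^ n) ^ n := sum_congr rfl fun k _ => by
        rw [sum_filter_apply_piWeight (sum_piWeight (sum_piWeight sum_bernoulliWeight)) k
          fun a : Fin n → Fin n → Bool => ∀ i, ∃ j, a i j = true,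
          sum_filter_forall_exists_piWeight_bernoulliWeight]
    _ = m * (1 - (1 - p) ^ n) ^ n := by simp

end Bernoulli

section Asymptotics

lemma one_sub_pow_le_exp_neg_mul {x : ℝ} (hx : x ≤ 1) (n : ℕ) : (1 - x) ^ n ≤ exp (-(n * x)) :=
  calc (1 - x) ^ n ≤ exp (-x) ^ n := pow_le_pow_left₀ (by linarith) (one_sub_le_exp_neg x) n
    _ = exp (-(n * x)) := by rw [← exp_nat_mul, mul_neg]

lemma exp_neg_mul_div_le_one_sub_pow {p : ℝ} (hp : p < 1) (n : ℕ) :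
    exp (-(n * p / (1 - p))) ≤ (1 - p) ^ n := by
  have hq : 0 < 1 - p := sub_pos.2 hp
  have hlog : -(p / (1 - p)) ≤ log (1 - p) := by
    have h := one_sub_inv_le_log_of_pos hq
    rwa [← one_div, one_sub_div hq.ne', sub_sub_cancel_left, neg_div] at h
  calc exp (-(n * p / (1 - p))) = exp (n * -(p / (1 - p))) := by ring_nf
    _ ≤ exp (n * log (1 - p)) := exp_le_exp.2 (mul_le_mul_of_nonneg_left hlog n.cast_nonneg)
    _ = (1 - p) ^ n := by rw [exp_nat_mul, exp_log hq]

lemma tendsto_log_add_const_div_atTop (c : ℝ) :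
    Tendsto (fun x : ℝ => (log x + c) / x) atTop (nhds 0) := by
  have hlog : Tendsto (fun x : ℝ => log x / x) atTop (nhds 0) := by
    simpa using tendsto_pow_log_div_mul_add_atTop 1 0 1 one_ne_zero
  simpa [div_eq_mul_inv, add_mul] using hlog.add (tendsto_inv_atTop_zero.const_mul c)

lemma tendsto_natCast_mul_one_sub_pow_atTop {p : ℕ → ℝ} {c α : ℝ} (hα : 0 < α)
    (hsmall : ∀ᶠ n : ℕ in atTop, p n ≤ (1 - α) * (log n + c) / n) :
    Tendsto (fun n : ℕ => n * (1 - p n) ^ n) atTop atTop := by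
  obtain ⟨δ, hδ0, hδα, hδ1⟩ : ∃ δ : ℝ, 0 < δ ∧ 2 * δ ≤ α ∧ δ ≤ 1 / 2 :=
    ⟨min α 1 / 2, by positivity, by linarith [min_le_left α 1], by linarith [min_le_right α 1]⟩
  have hlog : Tendsto (fun n : ℕ => log n) atTop atTop :=
    tendsto_log_atTop.comp tendsto_natCast_atTop_atTop
  have hL : ∀ᶠ n : ℕ in atTop, 0 ≤ log n + c :=
    (tendsto_atTop_add_const_right _ c hlog).eventually_ge_atTop 0
  have hpδ : ∀ᶠ n : ℕ in atTop, p n ≤ δ := by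
    have hbound := ((tendsto_log_add_const_div_atTop c).const_mul (1 - α)).comp
      tendsto_natCast_atTop_atTop
    rw [mul_zero] at hbound
    filter_upwards [hsmall, hbound.eventually_le_const hδ0] with n hpn hbn
    rw [mul_div_assoc] at hpn
    exact hpn.trans hbn
  refine tendsto_atTop_mono' _ ?_ (tendsto_exp_atTop.comp
    (tendsto_atTop_add_const_right _ (-((1 - δ) * c)) (hlog.const_mul_atTop hδ0)))
  filter_upwards [hsmall, hL, hpδ, eventually_gt_atTop 0] with n hpn hLn hpδn hn
  have hn' : (0 : ℝ) < n := Nat.cast_pos.2 hn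
  have hq : 0 < 1 - p n := by linarith
  -- `1 - α ≤ 1 - 2δ ≤ (1 - δ)² ≤ (1 - δ)(1 - p n)` absorbs the factor `1 / (1 - p n)`.
  have hexp : n * p n / (1 - p n) ≤ (1 - δ) * (log n + c) := by
    rw [div_le_iff₀ hq]
    have hnp : n * p n ≤ (1 - α) * (log n + c) := by
      rwa [le_div_iff₀ hn', mul_comm] at hpn
    have hcoef : 1 - α ≤ (1 - δ) * (1 - p n) := by nlinarith
    nlinarith [mul_le_mul_of_nonneg_right hcoef hLn]
  calc exp (δ * log n + -((1 - δ) * c)) = n * exp (-((1 - δ) * (log n + c))) := by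
        rw [← exp_log hn', ← exp_add, exp_log hn']
        ring_nf
    _ ≤ n * exp (-(n * p n / (1 - p n))) := by gcongr
    _ ≤ n * (1 - p n) ^ n := by gcongr; exact exp_neg_mul_div_le_one_sub_pow (by linarith) n

end Asymptotics

theorem stmt3_general (m : ℕ) (c α : ℝ) (hα : 0 < α)
    (p : ℕ → ℝ) (hp : ∀ n, p n ∈ Set.Icc (0 : ℝ) 1)
    (hsmall : ∀ᶠ n : ℕ in atTop, p n ≤ (1 - α) * (Real.log n + c) / n) :
    Tendsto (fun n : ℕ => bernoulliProb n m (p n) (fun M => IsPrimitive M))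
      atTop (nhds 0) := by
  have hbound : Tendsto (fun n : ℕ => (m : ℝ) * exp (-(n * (1 - p n) ^ n))) atTop (nhds 0) := by
    simpa using (tendsto_exp_atBot.comp (tendsto_neg_atTop_atBot.comp
      (tendsto_natCast_mul_one_sub_pow_atTop hα hsmall))).const_mul (m : ℝ)
  refine squeeze_zero (fun n => bernoulliProb_nonneg (hp n).1 (hp n).2 _) (fun n => ?_) hbound
  obtain ⟨hp0, hp1⟩ := hp n
  calc _ ≤ m * (1 - (1 - p n) ^ n) ^ n := bernoulliProb_isPrimitive_le hp0 hp1
    _ ≤ m * exp (-(n * (1 - p n) ^ n)) := by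
        gcongr
        exact one_sub_pow_le_exp_neg_mul (pow_le_one₀ (by linarith) (by linarith)) n

/-- Let `m ≥ 2`, `c ∈ ℝ`, `α > 0`, and let `p n ∈ [0,1]` satisfy
`p n ≤ (1-α)·(log n + c)/n` for all sufficiently large `n`.  Then the probability that
`B_m(n, p n)` is primitive tends to `0` as `n → ∞`. -/
theorem stmt3 (m : ℕ) (hm : 2 ≤ m) (c α : ℝ) (hα : 0 < α)
    (p : ℕ → ℝ) (hp : ∀ n, p n ∈ Set.Icc (0 : ℝ) 1)
    (hsmall : ∀ᶠ n : ℕ in atTop, p n ≤ (1 - α) * (Real.log n + c) / n) :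
    Tendsto (fun n : ℕ => bernoulliProb n m (p n) (fun M => IsPrimitive M))
      atTop (nhds 0) :=
  stmt3_general m c α hα p hp hsmall
end

section
/- Let n ≥ 1, p ∈ [0,1], and let 𝒞 be a finite nonempty set of n×n binary matrices such that: (a) for all n×n permutation matrices P and Q, the set {P·C·Q : C ∈ 𝒞} equals 𝒞, and (b) for all C, D ∈ 𝒞 there exist permutation matrices T_1, T_2 with C = T_1·D·T_2. For a binary matrix M, let σ(M) be its number of 1-entries and w(M) = p^{σ(M)}·(1−p)^{n²−σ(M)}. Then for all C, D ∈ 𝒞, the sum over all n×n binary matrices M with M ≥ C (entrywise) of w(M)/|{C' ∈ 𝒞 : M ≥ C'}| equals the sum over all n×n binary matrices M with M ≥ D of w(M)/|{C' ∈ 𝒞 : M ≥ C'}|. -/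
open Matrix Finset

/-- The permutation matrix (over `ℕ`) of a permutation `σ`. -/
def permMatN {n : ℕ} (σ : Equiv.Perm (Fin n)) : Matrix (Fin n) (Fin n) ℕ :=
  Matrix.of fun i j => if σ i = j then 1 else 0

/-!
If `C = P D Q` with permutation matrices `P`, `Q`, then `M ↦ P M Q` is a
bijection of binary matrices which preserves the number of ones, maps matrices dominating `D`
to matrices dominating `C`, and, since it permutes `𝒞`, preserves `#{C' ∈ 𝒞 : M ≥ C'}`.
Reindexing the sum for `D` along this bijection gives the sum for `C`.
-/

section

variable {n : ℕ} (T₁ T₂ : Equiv.Perm (Fin n))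

theorem permMatN_mul_apply (A : Matrix (Fin n) (Fin n) ℕ) (i j : Fin n) :
    (permMatN T₁ * A) i j = A (T₁ i) j := by
  simp [permMatN, mul_apply, ite_mul]

theorem mul_permMatN_apply (A : Matrix (Fin n) (Fin n) ℕ) (i j : Fin n) :
    (A * permMatN T₂) i j = A i (T₂⁻¹ j) := by
  simp [permMatN, mul_apply, mul_ite, ← Equiv.eq_symm_apply]

theorem permMatN_mul_mul_apply (A : Matrix (Fin n) (Fin n) ℕ) (i j : Fin n) :
    (permMatN T₁ * A * permMatN T₂) i j = A (T₁ i) (T₂⁻¹ j) := by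
  rw [mul_permMatN_apply, permMatN_mul_apply]

theorem permMatN_mul_mul_le_iff (A B : Matrix (Fin n) (Fin n) ℕ) :
    (∀ i j, (permMatN T₁ * A * permMatN T₂) i j ≤ (permMatN T₁ * B * permMatN T₂) i j) ↔
      ∀ i j, A i j ≤ B i j := by
  simp only [permMatN_mul_mul_apply]
  exact ⟨fun h i j => by simpa using h (T₁⁻¹ i) (T₂ j), fun h i j => h _ _⟩

theorem permMatN_mul_mul_injective :
    Function.Injective fun A : Matrix (Fin n) (Fin n) ℕ => permMatN T₁ * A * permMatN T₂ := by
  intro A B hAB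
  ext i j
  simpa [permMatN_mul_mul_apply] using congr_fun₂ hAB (T₁⁻¹ i) (T₂ j)

def boolPermEquiv : (Fin n → Fin n → Bool) ≃ (Fin n → Fin n → Bool) where
  toFun b i j := b (T₁ i) (T₂⁻¹ j)
  invFun b i j := b (T₁⁻¹ i) (T₂ j)
  left_inv b := by simp
  right_inv b := by simp

theorem toMat_boolPermEquiv (b : Fin n → Fin n → Bool) :
    toMat (boolPermEquiv T₁ T₂ b) = permMatN T₁ * toMat b * permMatN T₂ := by
  ext i j
  rw [permMatN_mul_mul_apply]
  rfl

theorem prod_prod_boolPermEquiv {R : Type*} [CommMonoid R] (f : Bool → R)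
    (b : Fin n → Fin n → Bool) :
    ∏ i, ∏ j, f (boolPermEquiv T₁ T₂ b i j) = ∏ i, ∏ j, f (b i j) :=
  calc ∏ i, ∏ j, f (b (T₁ i) (T₂⁻¹ j))
      = ∏ i, ∏ j, f (b i (T₂⁻¹ j)) := Equiv.prod_comp T₁ fun i => ∏ j, f (b i (T₂⁻¹ j))
    _ = ∏ i, ∏ j, f (b i j) := prod_congr rfl fun i _ => Equiv.prod_comp T₂⁻¹ (f <| b i ·)

theorem card_filter_le_permMatN_mul_mul (𝒞 : Finset (Matrix (Fin n) (Fin n) ℕ))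
    (h𝒞 : 𝒞.image (fun C => permMatN T₁ * C * permMatN T₂) = 𝒞) (B : Matrix (Fin n) (Fin n) ℕ)
    [DecidablePred fun C : Matrix (Fin n) (Fin n) ℕ =>
      ∀ i j, C i j ≤ (permMatN T₁ * B * permMatN T₂) i j]
    [DecidablePred fun C : Matrix (Fin n) (Fin n) ℕ => ∀ i j, C i j ≤ B i j] :
    #(𝒞.filter fun C => ∀ i j, C i j ≤ (permMatN T₁ * B * permMatN T₂) i j) =
      #(𝒞.filter fun C => ∀ i j, C i j ≤ B i j) := by
  conv_lhs => rw [← h𝒞, filter_image]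
  simp only [permMatN_mul_mul_le_iff]
  convert card_image_of_injective _ (permMatN_mul_mul_injective T₁ T₂)

end

open Classical in
theorem stmt6_general (n : ℕ) (p : ℝ)
    (𝒞 : Finset (Matrix (Fin n) (Fin n) ℕ))
    (ha : ∀ P Q : Equiv.Perm (Fin n),
      𝒞.image (fun C => permMatN P * C * permMatN Q) = 𝒞)
    (hb : ∀ C ∈ 𝒞, ∀ D ∈ 𝒞, ∃ T₁ T₂ : Equiv.Perm (Fin n),
      C = permMatN T₁ * D * permMatN T₂)
    (C D : Matrix (Fin n) (Fin n) ℕ) (hC : C ∈ 𝒞) (hD : D ∈ 𝒞) :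
    (∑ b : Fin n → Fin n → Bool,
      if ∀ i j, C i j ≤ toMat b i j then
        (∏ i : Fin n, ∏ j : Fin n, (if b i j then p else 1 - p)) /
          ((𝒞.filter fun C' => ∀ i j, C' i j ≤ toMat b i j).card : ℝ)
      else 0) =
    (∑ b : Fin n → Fin n → Bool,
      if ∀ i j, D i j ≤ toMat b i j then
        (∏ i : Fin n, ∏ j : Fin n, (if b i j then p else 1 - p)) /
          ((𝒞.filter fun C' => ∀ i j, C' i j ≤ toMat b i j).card : ℝ)
      else 0) := by
  obtain ⟨T₁, T₂, rfl⟩ := hb C hC D hD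
  refine (Fintype.sum_equiv (boolPermEquiv T₁ T₂) _ _ fun b => ?_).symm
  simp only [toMat_boolPermEquiv, permMatN_mul_mul_le_iff,
    card_filter_le_permMatN_mul_mul _ _ _ (ha _ _),
    prod_prod_boolPermEquiv T₁ T₂ (fun x => if x then p else 1 - p)]

open Classical in
/-- Let `𝒞` be a finite nonempty set of `n × n` binary matrices, closed under two-sided
multiplication by permutation matrices, and such that any two elements of `𝒞` differ by
two-sided multiplication by permutation matrices.  For each binary matrix `M` (encoded by
its Boolean matrix of entries `b`) give it the Bernoulli weight
`∏_{i,j} (p if b i j else 1-p)` (which equals `p^{σ(M)}·(1-p)^{n²-σ(M)}`).  Then the sum,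
over binary matrices `M` dominating `C`, of `weight(M) / #{C' ∈ 𝒞 : M ≥ C'}` does not
depend on the choice of `C ∈ 𝒞`. -/
theorem stmt6 (n : ℕ) (hn : 1 ≤ n) (p : ℝ) (hp : p ∈ Set.Icc (0 : ℝ) 1)
    (𝒞 : Finset (Matrix (Fin n) (Fin n) ℕ)) (hne : 𝒞.Nonempty)
    (hbin : ∀ C ∈ 𝒞, ∀ i j, C i j ≤ 1)
    (ha : ∀ P Q : Equiv.Perm (Fin n),
      𝒞.image (fun C => permMatN P * C * permMatN Q) = 𝒞)
    (hb : ∀ C ∈ 𝒞, ∀ D ∈ 𝒞, ∃ T₁ T₂ : Equiv.Perm (Fin n),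
      C = permMatN T₁ * D * permMatN T₂)
    (C D : Matrix (Fin n) (Fin n) ℕ) (hC : C ∈ 𝒞) (hD : D ∈ 𝒞) :
    (∑ b : Fin n → Fin n → Bool,
      if ∀ i j, C i j ≤ toMat b i j then
        (∏ i : Fin n, ∏ j : Fin n, (if b i j then p else 1 - p)) /
          ((𝒞.filter fun C' => ∀ i j, C' i j ≤ toMat b i j).card : ℝ)
      else 0) =
    (∑ b : Fin n → Fin n → Bool,
      if ∀ i j, D i j ≤ toMat b i j then
        (∏ i : Fin n, ∏ j : Fin n, (if b i j then p else 1 - p)) /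
          ((𝒞.filter fun C' => ∀ i j, C' i j ≤ toMat b i j).card : ℝ)
      else 0) :=
  stmt6_general n p 𝒞 ha hb C D hC hD
end

section
/- Let n ≥ 1, p ∈ [0,1], and let R_n be the set of all n×n binary row-stochastic matrices (binary matrices with exactly one 1 in each row). For a binary matrix M, let σ(M) be its number of 1-entries and w(M) = p^{σ(M)}·(1−p)^{n²−σ(M)}. Then for all C, D ∈ R_n, the sum over all n×n binary matrices M with M ≥ C (entrywise) of w(M)/|{C' ∈ R_n : M ≥ C'}| equals the sum over all n×n binary matrices M with M ≥ D of w(M)/|{C' ∈ R_n : M ≥ C'}|. -/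
open Matrix Finset

/-- A binary row-stochastic matrix: a 0/1 matrix with exactly one `1` in each row. -/
def IsRowStochBin {n : ℕ} (A : Matrix (Fin n) (Fin n) ℕ) : Prop :=
  (∀ i j, A i j ≤ 1) ∧ ∀ i, ∃! j, A i j = 1

lemma dom_iff {n : ℕ} {C : Matrix (Fin n) (Fin n) ℕ} (hC : IsRowStochBin C)
    {f : Fin n → Fin n} (hf : ∀ i, C i (f i) = 1) (b : Fin n → Fin n → Bool) :
    (∀ i j, C i j ≤ toMat b i j) ↔ ∀ i, b i (f i) = true := by
  constructor
  · intro h i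
    have h1 := h i (f i)
    rw [hf i] at h1
    by_contra hb
    simp [toMat, hb] at h1
  · intro h i j
    by_cases hj : j = f i
    · subst hj; simp [toMat, h i, hf i]
    · have h1 : C i j ≠ 1 := fun hcj => hj ((hC.2 i).unique hcj (hf i))
      have h0 : C i j = 0 := Nat.lt_one_iff.mp (lt_of_le_of_ne (hC.1 i j) h1)
      simp [h0]

lemma rowStoch_perm {n : ℕ} (σ : Fin n → Equiv.Perm (Fin n))
    {A : Matrix (Fin n) (Fin n) ℕ} (hA : IsRowStochBin A) :
    IsRowStochBin (Matrix.of fun i j => A i (σ i j)) := by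
  refine ⟨fun i j => hA.1 i _, fun i => ?_⟩
  obtain ⟨j, hj, hj'⟩ := hA.2 i
  refine ⟨(σ i).symm j, by simp [hj], fun y hy => ?_⟩
  have h2 := hj' _ hy
  rw [← h2]; simp

lemma card_perm {n : ℕ} (σ : Fin n → Equiv.Perm (Fin n)) (b : Fin n → Fin n → Bool) :
    Nat.card {C' : Matrix (Fin n) (Fin n) ℕ //
      IsRowStochBin C' ∧ ∀ i j, C' i j ≤ toMat (fun i j => b i (σ i j)) i j} =
    Nat.card {C' : Matrix (Fin n) (Fin n) ℕ //
      IsRowStochBin C' ∧ ∀ i j, C' i j ≤ toMat b i j} := by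
  apply Nat.card_congr
  refine ⟨fun x => ⟨Matrix.of fun i j => x.1 i ((σ i).symm j),
      rowStoch_perm (fun i => (σ i).symm) x.2.1, fun i j => ?_⟩,
    fun x => ⟨Matrix.of fun i j => x.1 i (σ i j),
      rowStoch_perm σ x.2.1, fun i j => ?_⟩, ?_, ?_⟩
  · have := x.2.2 i ((σ i).symm j)
    simpa [toMat] using this
  · have := x.2.2 i (σ i j)
    simpa [toMat] using this
  · intro x; apply Subtype.ext; ext i j; simp
  · intro x; apply Subtype.ext; ext i j; simp

open Classical in
/-- Let `R_n` be the set of `n × n` binary row-stochastic matrices.  For each binary matrix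
`M` (encoded by its Boolean matrix of entries `b`) give it the Bernoulli weight
`∏_{i,j} (p if b i j else 1-p)` (which equals `p^{σ(M)}·(1-p)^{n²-σ(M)}`).  Then the sum,
over binary matrices `M` dominating `C`, of `weight(M) / #{C' ∈ R_n : M ≥ C'}` does not
depend on the choice of `C ∈ R_n`. -/
theorem stmt7 (n : ℕ) (hn : 1 ≤ n) (p : ℝ) (hp : p ∈ Set.Icc (0 : ℝ) 1)
    (C D : Matrix (Fin n) (Fin n) ℕ) (hC : IsRowStochBin C) (hD : IsRowStochBin D) :
    (∑ b : Fin n → Fin n → Bool,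
      if ∀ i j, C i j ≤ toMat b i j then
        (∏ i : Fin n, ∏ j : Fin n, (if b i j then p else 1 - p)) /
          (Nat.card {C' : Matrix (Fin n) (Fin n) ℕ //
            IsRowStochBin C' ∧ ∀ i j, C' i j ≤ toMat b i j} : ℝ)
      else 0) =
    (∑ b : Fin n → Fin n → Bool,
      if ∀ i j, D i j ≤ toMat b i j then
        (∏ i : Fin n, ∏ j : Fin n, (if b i j then p else 1 - p)) /
          (Nat.card {C' : Matrix (Fin n) (Fin n) ℕ //
            IsRowStochBin C' ∧ ∀ i j, C' i j ≤ toMat b i j} : ℝ)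
      else 0) := by
  classical
  obtain ⟨hC1, hC2⟩ := hC
  obtain ⟨hD1, hD2⟩ := hD
  choose f hf hf' using hC2
  choose g hg hg' using hD2
  set σ : Fin n → Equiv.Perm (Fin n) := fun i => Equiv.swap (f i) (g i) with hσ
  refine Fintype.sum_equiv
    ⟨fun b => fun i j => b i (σ i j), fun b => fun i j => b i (σ i j),
     fun b => by funext i j; simp [σ], fun b => by funext i j; simp [σ]⟩
    _ _ ?_
  intro b
  dsimp only [Equiv.coe_fn_mk]
  have hcond : (∀ i j, C i j ≤ toMat b i j) ↔
      (∀ i j, D i j ≤ toMat (fun i j => b i (σ i j)) i j) := by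
    rw [dom_iff ⟨hC1, fun i => ⟨f i, hf i, fun y hy => hf' i y hy⟩⟩ hf b,
        dom_iff ⟨hD1, fun i => ⟨g i, hg i, fun y hy => hg' i y hy⟩⟩ hg]
    apply forall_congr'
    intro i
    simp [σ, Equiv.swap_apply_right]
  by_cases h : ∀ i j, C i j ≤ toMat b i j
  · rw [if_pos h, if_pos (hcond.mp h), card_perm σ b]
    congr 1
    exact Finset.prod_congr rfl fun i _ => (Fintype.prod_equiv (σ i) _ _ fun j => rfl).symm
  · rw [if_neg h, if_neg fun h' => h (hcond.mpr h')]
end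

section
/- Let n ≥ 2 and let M = {Ī, Q_1, Q_2} be a set of n×n binary matrices, where Ī = I + I_{i,j} is a perturbed identity matrix (I the identity, j ≠ i) and Q_1, Q_2 are symmetric permutation matrices. If M is irreducible, then there exist a permutation π of {1,...,n} (with permutation matrix R) and an ordering (Q, Q') of (Q_1, Q_2) such that R·Q·Rᵀ and R·Q'·Rᵀ are the permutation matrices of permutations q and q' of the following form. If n is even, either: (Form A) q(1)=1, q(n)=n, q(i)=i+1 for even i with 2 ≤ i ≤ n−2, q(i)=i−1 for odd i with 3 ≤ i ≤ n−1, and q'(i)=i−1 for even i, q'(i)=i+1 for odd i; or (Form B) q(1)=n, q(n)=1, q(i)=i+1 for even i with 2 ≤ i ≤ n−2, q(i)=i−1 for odd i with 3 ≤ i ≤ n−1, and q'(i)=i−1 for even i, q'(i)=i+1 for odd i. If n is odd: q(1)=1, q(i)=i+1 for even i, q(i)=i−1 for odd i with 3 ≤ i ≤ n, and q'(n)=n, q'(i)=i−1 for even i, q'(i)=i+1 for odd i with 1 ≤ i ≤ n−2. -/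
/-!
Symmetric permutation matrices are involutions `f`, `g`, and the perturbation `I_{i,j}` adds a
single directed edge, which cannot make a disconnected graph strongly connected; so the graph
with edges `x — f x` and `x — g x` is connected. Walking from a vertex by alternately applying
`g` and `f` then visits every vertex once before it closes up: if `f` has a fixed point and
the walk starts there, it stops at a fixed point of the last map applied (a path); if neither
map has a fixed point, it returns to its start after an even number of steps (a cycle).
Numbering the vertices in the order of the walk gives the canonical forms.
-/

open Matrix

/-- The 0/1 matrix of a map on states `{1, ..., n}` described by `f : ℕ → ℕ`
(state `a` corresponds to the index `a.val + 1`): entry `(a, b)` is `1` iff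
`f (a+1) = b+1` in the 1-indexed labels. -/
def matOfFun (n : ℕ) (f : ℕ → ℕ) : Matrix (Fin n) (Fin n) ℕ :=
  Matrix.of fun a b => if f (a.val + 1) = b.val + 1 then 1 else 0

/-- Form A (for `n` even): `q(1)=1`, `q(n)=n`, `q(i)=i+1` for even `i`, `2 ≤ i ≤ n−2`,
`q(i)=i−1` for odd `i`, `3 ≤ i ≤ n−1`. -/
def formA (n : ℕ) : Matrix (Fin n) (Fin n) ℕ :=
  matOfFun n fun s => if s = 1 then 1 else if s = n then n
    else if s % 2 = 0 then s + 1 else s - 1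

/-- Form B (for `n` even): `q(1)=n`, `q(n)=1`, `q(i)=i+1` for even `i`, `2 ≤ i ≤ n−2`,
`q(i)=i−1` for odd `i`, `3 ≤ i ≤ n−1`. -/
def formB (n : ℕ) : Matrix (Fin n) (Fin n) ℕ :=
  matOfFun n fun s => if s = 1 then n else if s = n then 1
    else if s % 2 = 0 then s + 1 else s - 1

/-- The second letter's form (for `n` even): `q'(i)=i−1` for even `i`, `q'(i)=i+1`
for odd `i`. -/
def formEvenSnd (n : ℕ) : Matrix (Fin n) (Fin n) ℕ :=
  matOfFun n fun s => if s % 2 = 0 then s - 1 else s + 1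

/-- First form for `n` odd: `q(1)=1`, `q(i)=i+1` for even `i`, `q(i)=i−1` for odd `i`,
`3 ≤ i ≤ n`. -/
def formOddFst (n : ℕ) : Matrix (Fin n) (Fin n) ℕ :=
  matOfFun n fun s => if s = 1 then 1 else if s % 2 = 0 then s + 1 else s - 1

/-- Second form for `n` odd: `q'(n)=n`, `q'(i)=i−1` for even `i`, `q'(i)=i+1` for odd `i`,
`1 ≤ i ≤ n−2`. -/
def formOddSnd (n : ℕ) : Matrix (Fin n) (Fin n) ℕ :=
  matOfFun n fun s => if s = n then n else if s % 2 = 0 then s - 1 else s + 1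

/-- Relabeling of the states of the matrix `Q` by the permutation `π`. -/
def relabel {n : ℕ} (π : Equiv.Perm (Fin n)) (Q : Matrix (Fin n) (Fin n) ℕ) :
    Matrix (Fin n) (Fin n) ℕ :=
  permMatN π * Q * (permMatN π)ᵀ

section PermMatrix

variable {n : ℕ}

theorem relabel_permMatN_apply (π σ : Equiv.Perm (Fin n)) (a b : Fin n) :
    relabel π (permMatN σ) a b = if σ (π a) = π b then 1 else 0 := by
  simp only [relabel, permMatN, mul_apply, of_apply, mul_ite, mul_one, mul_zero, transpose_apply,
    Finset.sum_ite_eq, Finset.mem_univ, if_true]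
  rw [Finset.sum_eq_single (π a) (by aesop) (by simp)]
  simp

theorem involutive_of_transpose_permMatN_eq {σ : Equiv.Perm (Fin n)}
    (h : (permMatN σ)ᵀ = permMatN σ) : Function.Involutive σ := fun x => by
  simpa [permMatN] using congrFun (congrFun h (σ x)) x

theorem relabel_permMatN_eq_matOfFun {π σ : Equiv.Perm (Fin n)} {w : ℕ → Fin n}
    (hπ : ∀ a : Fin n, π a = w a) {F : ℕ → ℕ}
    (hF : ∀ a < n, ∃ b < n, F (a + 1) = b + 1 ∧ σ (w a) = w b) :
    relabel π (permMatN σ) = matOfFun n F := by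
  ext a c
  obtain ⟨b, hb, hFb, hσ⟩ := hF a a.isLt
  rw [relabel_permMatN_apply, matOfFun, Matrix.of_apply, hπ, hπ, hσ, hFb,
    ← hπ ⟨b, hb⟩, ← hπ c]
  simp [π.injective.eq_iff, Fin.ext_iff]

theorem exists_perm_eq_of_injOn {w : ℕ → Fin n} (hw : Set.InjOn w (Set.Iio n)) :
    ∃ π : Equiv.Perm (Fin n), ∀ a : Fin n, π a = w a := by
  have hinj : Function.Injective fun a : Fin n => w a := fun a b h =>
    Fin.ext (hw a.isLt b.isLt h)
  exact ⟨Equiv.ofBijective _ (Finite.injective_iff_bijective.mp hinj), fun _ => rfl⟩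

end PermMatrix

theorem Relation.ReflTransGen.total_of_total_add_edge {α : Type*} {r s : α → α → Prop}
    [Std.Symm r] {i j : α} (hs : ∀ u v, s u v → u = v ∨ r u v ∨ (u = i ∧ v = j))
    (h : ∀ a b, ReflTransGen s a b) (a b : α) : ReflTransGen r a b := by
  have key : ∀ {a b}, ReflTransGen s a b →
      ReflTransGen r a b ∨ (ReflTransGen r a i ∧ ReflTransGen r j b) := by
    intro a b hab
    induction hab with
    | refl => exact Or.inl .refl
    | tail _ hst ih =>
      rcases hs _ _ hst with rfl | hr | ⟨rfl, rfl⟩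
      · exact ih
      · exact ih.imp (·.tail hr) (And.imp_right (·.tail hr))
      · exact Or.inr ⟨ih.elim id And.left, .refl⟩
  have hji : ReflTransGen r j i := (key (h j i)).elim id And.left
  exact (key (h a b)).elim id fun ⟨hai, hjb⟩ => (hai.trans (symm hji)).trans hjb

theorem eq_or_adj_of_entry_pos {n : ℕ} {i j : Fin n} {f g : Equiv.Perm (Fin n)} {u v : Fin n}
    (h : 0 < ((1 + Matrix.single i j 1 + permMatN f + permMatN g :
      Matrix (Fin n) (Fin n) ℕ)) u v) :
    u = v ∨ (f u = v ∨ g u = v) ∨ (u = i ∧ v = j) := by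
  by_contra! ⟨huv, ⟨hfu, hgu⟩, hij⟩
  have hij' : ¬(i = u ∧ j = v) := fun ⟨h1, h2⟩ => hij h1.symm h2.symm
  simp [permMatN, huv, hfu, hgu, hij'] at h

theorem reflTransGen_of_irreducible {n : ℕ} {i j : Fin n} {f g : Equiv.Perm (Fin n)}
    (hf : Function.Involutive f) (hg : Function.Involutive g)
    (hirr : ∀ a b : Fin n, Relation.ReflTransGen (fun u v => 0 <
      ((1 + Matrix.single i j 1 + permMatN f + permMatN g : Matrix (Fin n) (Fin n) ℕ)) u v) a b) :
    ∀ x y, Relation.ReflTransGen (fun x y => f x = y ∨ g x = y) x y :=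
  haveI : Std.Symm fun x y => f x = y ∨ g x = y :=
    ⟨fun x _ h => h.imp (by rintro rfl; exact hf x) (by rintro rfl; exact hg x)⟩
  Relation.ReflTransGen.total_of_total_add_edge (fun _ _ => eq_or_adj_of_entry_pos) hirr

theorem exists_first_repeat {α : Type*} [Finite α] (w : ℕ → α) :
    ∃ b, Set.InjOn w (Set.Iio b) ∧ ∃ a < b, w a = w b := by
  classical
  have hex : ∃ b, ∃ a < b, w a = w b := by
    obtain ⟨x, y, hne, hxy⟩ := Finite.exists_ne_map_eq_of_infinite w
    rcases hne.lt_or_gt with h | h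
    exacts [⟨y, x, h, hxy⟩, ⟨x, y, h, hxy.symm⟩]
  refine ⟨Nat.find hex, fun x hx y hy hxy => ?_, Nat.find_spec hex⟩
  by_contra hne
  rcases Nat.lt_or_gt_of_ne hne with h | h
  · exact Nat.find_min hex hy ⟨x, h, hxy⟩
  · exact Nat.find_min hex hx ⟨y, h, hxy.symm⟩

section AltWalk

variable {α : Type*} (f g : α → α)

def altStep (k : ℕ) : α → α :=
  if k % 2 = 0 then g else f

-- `v, g v, f (g v), …`; the vertex reached after `a` steps receives the label `a + 1`.
def altWalk (v : α) : ℕ → α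
  | 0 => v
  | k + 1 => altStep f g k (altWalk v k)

variable {f g}

theorem altStep_eq_of_mod_two_eq {k m : ℕ} (h : k % 2 = m % 2) :
    altStep f g k = altStep f g m := by
  simp only [altStep, h]

theorem altStep_involutive (hf : f.Involutive) (hg : g.Involutive) (k : ℕ) :
    (altStep f g k).Involutive := by
  unfold altStep
  split_ifs
  exacts [hg, hf]

@[simp]
theorem altWalk_zero (v : α) : altWalk f g v 0 = v := rfl

theorem altWalk_succ (v : α) (k : ℕ) :
    altWalk f g v (k + 1) = altStep f g k (altWalk f g v k) := rfl

theorem altStep_altWalk_succ (hf : f.Involutive) (hg : g.Involutive) (v : α) (k : ℕ) :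
    altStep f g k (altWalk f g v (k + 1)) = altWalk f g v k :=
  altStep_involutive hf hg k _

theorem altWalk_odd_edge (hf : f.Involutive) (hg : g.Involutive) (v : α) {a b : ℕ}
    (h : a % 2 = 1 ∧ b = a + 1 ∨ b % 2 = 1 ∧ a = b + 1) :
    f (altWalk f g v a) = altWalk f g v b := by
  rcases h with ⟨ha, rfl⟩ | ⟨hb, rfl⟩
  · simp [altWalk_succ, altStep, ha]
  · simpa [altStep, hb] using altStep_altWalk_succ hf hg v b

theorem altWalk_even_edge (hf : f.Involutive) (hg : g.Involutive) (v : α) {a b : ℕ}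
    (h : a % 2 = 0 ∧ b = a + 1 ∨ b % 2 = 0 ∧ a = b + 1) :
    g (altWalk f g v a) = altWalk f g v b := by
  rcases h with ⟨ha, rfl⟩ | ⟨hb, rfl⟩
  · simp [altWalk_succ, altStep, ha]
  · simpa [altStep, hb] using altStep_altWalk_succ hf hg v b

theorem altWalk_first_repeat (hf : f.Involutive) (hg : g.Involutive) {v : α} {a b : ℕ}
    (hinj : Set.InjOn (altWalk f g v) (Set.Iio b)) (hab : a < b)
    (hrep : altWalk f g v a = altWalk f g v b) :
    a + 1 = b ∨ (a = 0 ∧ b % 2 = 0 ∧ altWalk f g v (b - 1) = f v) := by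
  obtain ⟨c, rfl⟩ : ∃ c, b = c + 1 := ⟨b - 1, by omega⟩
  by_cases hac : a = c
  · exact Or.inl (by omega)
  right
  have hc : altWalk f g v c = altStep f g c (altWalk f g v a) := by
    rw [hrep, altStep_altWalk_succ hf hg]
  have hpar : c % 2 ≠ a % 2 := by
    intro hp
    rw [altStep_eq_of_mod_two_eq hp, ← altWalk_succ] at hc
    have := hinj (Set.mem_Iio.mpr (by omega)) (Set.mem_Iio.mpr (by omega)) hc
    omega
  rcases Nat.eq_zero_or_pos a with rfl | ha
  · refine ⟨rfl, by omega, ?_⟩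
    simpa [altStep, show c % 2 ≠ 0 by omega] using hc
  · obtain ⟨d, rfl⟩ : ∃ d, a = d + 1 := ⟨a - 1, by omega⟩
    rw [altStep_eq_of_mod_two_eq (show c % 2 = d % 2 by omega), altStep_altWalk_succ hf hg] at hc
    have := hinj (Set.mem_Iio.mpr (by omega)) (Set.mem_Iio.mpr (by omega)) hc
    omega

theorem card_eq_of_first_repeat [Fintype α] (hf : f.Involutive) (hg : g.Involutive)
    (hconn : ∀ x y, Relation.ReflTransGen (fun x y => f x = y ∨ g x = y) x y) {v : α} {b : ℕ}
    (hinj : Set.InjOn (altWalk f g v) (Set.Iio b))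
    (hrep : ∃ a < b, altWalk f g v a = altWalk f g v b)
    (hfv : ∃ a < b, altWalk f g v a = f v) :
    Fintype.card α = b := by
  classical
  set w := altWalk f g v
  set S := (Finset.range b).image w
  have hmem : ∀ {k}, k ≤ b → w k ∈ S := by
    intro k hk
    obtain ⟨a, ha, hwa⟩ := hrep
    rcases hk.lt_or_eq with hk | rfl
    · exact Finset.mem_image_of_mem w (Finset.mem_range.mpr hk)
    · exact hwa ▸ Finset.mem_image_of_mem w (Finset.mem_range.mpr ha)
  have hclosed : ∀ x ∈ S, f x ∈ S ∧ g x ∈ S := by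
    intro x hx
    obtain ⟨k, hk, rfl⟩ := Finset.mem_image.mp hx
    rw [Finset.mem_range] at hk
    have hstep : ∀ m, altStep f g m (w k) ∈ S := by
      intro m
      by_cases hm : m % 2 = k % 2
      · rw [altStep_eq_of_mod_two_eq hm]
        exact hmem (k := k + 1) hk
      cases k with
      | zero =>
        obtain ⟨a, ha, hwa⟩ := hfv
        have hm : altStep f g m (w 0) = f v := by simp [altStep, show m % 2 ≠ 0 by omega, w]
        rw [hm, ← hwa]
        exact hmem ha.le
      | succ k =>
        rw [altStep_eq_of_mod_two_eq (show m % 2 = k % 2 by omega), altStep_altWalk_succ hf hg]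
        exact hmem (by omega)
    exact ⟨hstep 1, hstep 0⟩
  have huniv : S = Finset.univ := Finset.eq_univ_of_forall fun y => by
    induction hconn v y with
    | refl => exact hmem (k := 0) (Nat.zero_le b)
    | tail _ hxy ih =>
      rcases hxy with rfl | rfl
      exacts [(hclosed _ ih).1, (hclosed _ ih).2]
  rw [← Finset.card_univ, ← huniv, Finset.card_image_of_injOn (by simpa using hinj),
    Finset.card_range]

end AltWalk

section Forms

variable {n : ℕ} {f g π : Equiv.Perm (Fin n)} {v : Fin n}

theorem relabel_eq_formA (hf : Function.Involutive f) (hg : Function.Involutive g)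
    (hπ : ∀ a : Fin n, π a = altWalk f g v a) (hn : n % 2 = 0) (hv : f v = v)
    (hend : f (altWalk f g v (n - 1)) = altWalk f g v (n - 1)) :
    relabel π (permMatN f) = formA n := by
  refine relabel_permMatN_eq_matOfFun hπ fun a ha => ?_
  split_ifs with h1 hn' hpar
  · exact ⟨0, by omega, by omega, by simpa [show a = 0 by omega] using hv⟩
  · exact ⟨n - 1, by omega, by omega, by rwa [show a = n - 1 by omega]⟩
  · exact ⟨a + 1, by omega, by omega, altWalk_odd_edge hf hg v (by omega)⟩
  · exact ⟨a - 1, by omega, by omega, altWalk_odd_edge hf hg v (by omega)⟩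

theorem relabel_eq_formB (hf : Function.Involutive f) (hg : Function.Involutive g)
    (hπ : ∀ a : Fin n, π a = altWalk f g v a) (hn : n % 2 = 0)
    (hfv : f v = altWalk f g v (n - 1)) :
    relabel π (permMatN f) = formB n := by
  refine relabel_permMatN_eq_matOfFun hπ fun a ha => ?_
  split_ifs with h1 hn' hpar
  · exact ⟨n - 1, by omega, by omega, by simpa [show a = 0 by omega] using hfv⟩
  · exact ⟨0, by omega, by omega, by rw [show a = n - 1 by omega, ← hfv, hf, altWalk_zero]⟩
  · exact ⟨a + 1, by omega, by omega, altWalk_odd_edge hf hg v (by omega)⟩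
  · exact ⟨a - 1, by omega, by omega, altWalk_odd_edge hf hg v (by omega)⟩

theorem relabel_eq_formEvenSnd (hf : Function.Involutive f) (hg : Function.Involutive g)
    (hπ : ∀ a : Fin n, π a = altWalk f g v a) (hn : n % 2 = 0) :
    relabel π (permMatN g) = formEvenSnd n := by
  refine relabel_permMatN_eq_matOfFun hπ fun a ha => ?_
  split_ifs with hpar
  · exact ⟨a - 1, by omega, by omega, altWalk_even_edge hf hg v (by omega)⟩
  · exact ⟨a + 1, by omega, by omega, altWalk_even_edge hf hg v (by omega)⟩

theorem relabel_eq_formOddFst (hf : Function.Involutive f) (hg : Function.Involutive g)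
    (hπ : ∀ a : Fin n, π a = altWalk f g v a) (hn : n % 2 = 1) (hv : f v = v) :
    relabel π (permMatN f) = formOddFst n := by
  refine relabel_permMatN_eq_matOfFun hπ fun a ha => ?_
  split_ifs with h1 hpar
  · exact ⟨0, by omega, by omega, by simpa [show a = 0 by omega] using hv⟩
  · exact ⟨a + 1, by omega, by omega, altWalk_odd_edge hf hg v (by omega)⟩
  · exact ⟨a - 1, by omega, by omega, altWalk_odd_edge hf hg v (by omega)⟩

theorem relabel_eq_formOddSnd (hf : Function.Involutive f) (hg : Function.Involutive g)
    (hπ : ∀ a : Fin n, π a = altWalk f g v a) (hn : n % 2 = 1)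
    (hend : g (altWalk f g v (n - 1)) = altWalk f g v (n - 1)) :
    relabel π (permMatN g) = formOddSnd n := by
  refine relabel_permMatN_eq_matOfFun hπ fun a ha => ?_
  split_ifs with hn' hpar
  · exact ⟨n - 1, by omega, by omega, by rwa [show a = n - 1 by omega]⟩
  · exact ⟨a - 1, by omega, by omega, altWalk_even_edge hf hg v (by omega)⟩
  · exact ⟨a + 1, by omega, by omega, altWalk_even_edge hf hg v (by omega)⟩

end Forms

def HasCanonicalForm (n : ℕ) (Q Q' : Matrix (Fin n) (Fin n) ℕ) : Prop :=
  ∃ π : Equiv.Perm (Fin n),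
    (Even n → (relabel π Q = formA n ∨ relabel π Q = formB n) ∧
      relabel π Q' = formEvenSnd n) ∧
    (Odd n → relabel π Q = formOddFst n ∧ relabel π Q' = formOddSnd n)

section Canonical

variable {n : ℕ} {f g : Equiv.Perm (Fin n)}

theorem hasCanonicalForm_of_isFixedPt (hf : Function.Involutive f) (hg : Function.Involutive g)
    (hconn : ∀ x y, Relation.ReflTransGen (fun x y => f x = y ∨ g x = y) x y)
    {v : Fin n} (hv : f v = v) :
    HasCanonicalForm n (permMatN f) (permMatN g) := by
  obtain ⟨b, hinj, a, hab, hrep⟩ := exists_first_repeat (altWalk f g v)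
  have hb : a + 1 = b := by
    refine (altWalk_first_repeat hf hg hinj hab hrep).resolve_right ?_
    rintro ⟨rfl, hb, hfv⟩
    have := hinj (Set.mem_Iio.mpr (by omega : b - 1 < b)) (Set.mem_Iio.mpr hab)
      (by rw [hfv, hv]; rfl)
    omega
  have hn : n = b := by
    simpa using
      card_eq_of_first_repeat hf hg hconn hinj ⟨a, hab, hrep⟩ ⟨0, by omega, hv.symm⟩
  subst hn
  obtain rfl : a = n - 1 := by omega
  obtain ⟨π, hπ⟩ := exists_perm_eq_of_injOn hinj
  refine ⟨π, fun he => ⟨Or.inl ?_, ?_⟩, fun ho => ⟨?_, ?_⟩⟩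
  · have hev := Nat.even_iff.mp he
    refine relabel_eq_formA hf hg hπ hev hv ?_
    rw [altWalk_odd_edge hf hg v (b := n) (by omega), hrep]
  · exact relabel_eq_formEvenSnd hf hg hπ (Nat.even_iff.mp he)
  · exact relabel_eq_formOddFst hf hg hπ (Nat.odd_iff.mp ho) hv
  · have hodd := Nat.odd_iff.mp ho
    refine relabel_eq_formOddSnd hf hg hπ hodd ?_
    rw [altWalk_even_edge hf hg v (b := n) (by omega), hrep]

theorem hasCanonicalForm_of_fixedPointFree (hf : Function.Involutive f)
    (hg : Function.Involutive g)
    (hconn : ∀ x y, Relation.ReflTransGen (fun x y => f x = y ∨ g x = y) x y)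
    (hf₀ : ∀ x, f x ≠ x) (hg₀ : ∀ x, g x ≠ x) (v : Fin n) :
    HasCanonicalForm n (permMatN f) (permMatN g) := by
  obtain ⟨b, hinj, a, hab, hrep⟩ := exists_first_repeat (altWalk f g v)
  obtain ⟨rfl, hb, hfv⟩ : a = 0 ∧ b % 2 = 0 ∧ altWalk f g v (b - 1) = f v := by
    refine (altWalk_first_repeat hf hg hinj hab hrep).resolve_left ?_
    rintro rfl
    rw [altWalk_succ] at hrep
    unfold altStep at hrep
    split_ifs at hrep
    exacts [hg₀ _ hrep.symm, hf₀ _ hrep.symm]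
  have hn : n = b := by
    simpa using
      card_eq_of_first_repeat hf hg hconn hinj ⟨0, hab, hrep⟩ ⟨b - 1, by omega, hfv⟩
  subst hn
  obtain ⟨π, hπ⟩ := exists_perm_eq_of_injOn hinj
  refine ⟨π, fun _ => ⟨Or.inr ?_, ?_⟩, fun ho => ?_⟩
  · exact relabel_eq_formB hf hg hπ hb hfv.symm
  · exact relabel_eq_formEvenSnd hf hg hπ hb
  · exact absurd (Nat.odd_iff.mp ho) (by omega)

end Canonical

theorem exists_canonical_relabel_of_hasCanonicalForm {n : ℕ}
    {Q₁ Q₂ : Matrix (Fin n) (Fin n) ℕ}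
    (h : HasCanonicalForm n Q₁ Q₂ ∨ HasCanonicalForm n Q₂ Q₁) :
    (Even n → ∃ π : Equiv.Perm (Fin n), ∃ F ∈ ({formA n, formB n} :
        Set (Matrix (Fin n) (Fin n) ℕ)),
      (relabel π Q₁ = F ∧ relabel π Q₂ = formEvenSnd n) ∨
      (relabel π Q₂ = F ∧ relabel π Q₁ = formEvenSnd n)) ∧
    (Odd n → ∃ π : Equiv.Perm (Fin n),
      (relabel π Q₁ = formOddFst n ∧ relabel π Q₂ = formOddSnd n) ∨
      (relabel π Q₂ = formOddFst n ∧ relabel π Q₁ = formOddSnd n)) := by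
  refine ⟨fun he => ?_, fun ho => ?_⟩
  · rcases h with ⟨π, hE, -⟩ | ⟨π, hE, -⟩
    exacts [⟨π, _, (hE he).1, Or.inl ⟨rfl, (hE he).2⟩⟩,
      ⟨π, _, (hE he).1, Or.inr ⟨rfl, (hE he).2⟩⟩]
  · rcases h with ⟨π, -, hO⟩ | ⟨π, -, hO⟩
    exacts [⟨π, Or.inl (hO ho)⟩, ⟨π, Or.inr (hO ho)⟩]

theorem stmt14_general (n : ℕ) (hn : 2 ≤ n) (i j : Fin n)
    (Q₁ Q₂ : Matrix (Fin n) (Fin n) ℕ)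
    (hQ₁ : ∃ σ : Equiv.Perm (Fin n), Q₁ = permMatN σ) (hQ₁s : Q₁ᵀ = Q₁)
    (hQ₂ : ∃ σ : Equiv.Perm (Fin n), Q₂ = permMatN σ) (hQ₂s : Q₂ᵀ = Q₂)
    (hirr : ∀ a b : Fin n, Relation.ReflTransGen
      (fun u v => 0 < (((1 : Matrix (Fin n) (Fin n) ℕ) + Matrix.single i j 1
        + Q₁ + Q₂ : Matrix (Fin n) (Fin n) ℕ)) u v) a b) :
    (Even n → ∃ π : Equiv.Perm (Fin n), ∃ F ∈ ({formA n, formB n} :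
        Set (Matrix (Fin n) (Fin n) ℕ)),
      (relabel π Q₁ = F ∧ relabel π Q₂ = formEvenSnd n) ∨
      (relabel π Q₂ = F ∧ relabel π Q₁ = formEvenSnd n)) ∧
    (Odd n → ∃ π : Equiv.Perm (Fin n),
      (relabel π Q₁ = formOddFst n ∧ relabel π Q₂ = formOddSnd n) ∨
      (relabel π Q₂ = formOddFst n ∧ relabel π Q₁ = formOddSnd n)) := by
  obtain ⟨f, rfl⟩ := hQ₁
  obtain ⟨g, rfl⟩ := hQ₂
  have hf := involutive_of_transpose_permMatN_eq hQ₁s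
  have hg := involutive_of_transpose_permMatN_eq hQ₂s
  have hconn := reflTransGen_of_irreducible hf hg hirr
  apply exists_canonical_relabel_of_hasCanonicalForm
  by_cases hf₀ : ∃ v, f v = v
  · exact Or.inl (hasCanonicalForm_of_isFixedPt hf hg hconn hf₀.choose_spec)
  by_cases hg₀ : ∃ v, g v = v
  · refine Or.inr (hasCanonicalForm_of_isFixedPt hg hf (fun x y => ?_) hg₀.choose_spec)
    exact Relation.ReflTransGen.mono (fun _ _ => Or.symm) _ _ (hconn x y)
  simp only [not_exists] at hf₀ hg₀
  exact Or.inl (hasCanonicalForm_of_fixedPointFree hf hg hconn hf₀ hg₀ ⟨0, by omega⟩)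

/-- Let `n ≥ 2` and `M = {Ī, Q₁, Q₂}` with `Ī = I + I_{i,j}` (`j ≠ i`) a perturbed
identity and `Q₁, Q₂` symmetric permutation matrices.  If `M` is irreducible then, up to a
relabeling of the states and an ordering of `(Q₁, Q₂)`, the two permutation matrices have
the canonical forms described in the paper: for `n` even, form A or form B together with
the standard "second" form; for `n` odd, the two odd forms. -/
theorem stmt14 (n : ℕ) (hn : 2 ≤ n) (i j : Fin n) (hij : i ≠ j)
    (Q₁ Q₂ : Matrix (Fin n) (Fin n) ℕ)
    (hQ₁ : ∃ σ : Equiv.Perm (Fin n), Q₁ = permMatN σ) (hQ₁s : Q₁ᵀ = Q₁)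
    (hQ₂ : ∃ σ : Equiv.Perm (Fin n), Q₂ = permMatN σ) (hQ₂s : Q₂ᵀ = Q₂)
    (hirr : ∀ a b : Fin n, Relation.ReflTransGen
      (fun u v => 0 < (((1 : Matrix (Fin n) (Fin n) ℕ) + Matrix.single i j 1
        + Q₁ + Q₂ : Matrix (Fin n) (Fin n) ℕ)) u v) a b) :
    (Even n → ∃ π : Equiv.Perm (Fin n), ∃ F ∈ ({formA n, formB n} :
        Set (Matrix (Fin n) (Fin n) ℕ)),
      (relabel π Q₁ = F ∧ relabel π Q₂ = formEvenSnd n) ∨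
      (relabel π Q₂ = F ∧ relabel π Q₁ = formEvenSnd n)) ∧
    (Odd n → ∃ π : Equiv.Perm (Fin n),
      (relabel π Q₁ = formOddFst n ∧ relabel π Q₂ = formOddSnd n) ∨
      (relabel π Q₂ = formOddFst n ∧ relabel π Q₁ = formOddSnd n)) :=
  stmt14_general n hn i j Q₁ Q₂ hQ₁ hQ₁s hQ₂ hQ₂s hirr
end

section
/- Let n ≥ 4 be even. Let q_1 be the permutation of {1,...,n} with q_1(1)=n, q_1(n)=1, q_1(i)=i+1 for even i with 2 ≤ i ≤ n−2, q_1(i)=i−1 for odd i with 3 ≤ i ≤ n−1, and let q_2 be the permutation with q_2(i)=i−1 for even i and q_2(i)=i+1 for odd i; let Q_1, Q_2 be their permutation matrices. Then for all i, j ∈ {1,...,n} with i ≠ j, the set {I + I_{i,j}, Q_1, Q_2} (I the identity matrix) is not primitive. -/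
open Matrix

/-- The permutation matrix of `q₁` with `q₁(1)=n`, `q₁(n)=1`, `q₁(i)=i+1` for even `i`
with `2 ≤ i ≤ n−2`, `q₁(i)=i−1` for odd `i` with `3 ≤ i ≤ n−1`. -/
def Q1mat (n : ℕ) : Matrix (Fin n) (Fin n) ℕ :=
  matOfFun n fun s => if s = 1 then n else if s = n then 1
    else if s % 2 = 0 then s + 1 else s - 1

/-- The permutation matrix of `q₂` with `q₂(i)=i−1` for even `i`, `q₂(i)=i+1` for odd
`i`. -/
def Q2mat (n : ℕ) : Matrix (Fin n) (Fin n) ℕ :=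
  matOfFun n fun s => if s % 2 = 0 then s - 1 else s + 1

/-!
If the states carry a coloring such that each matrix of the set sends every color class into a
single color class, then so does every product, so with at least two colors no product is
positive. In 0-indexed labels `Q₁` and `Q₂` are the two perfect matchings of the cycle `ZMod n`:
`a ↦ a ∓ 1` and `a ↦ a ± 1` according as `a` is even or odd. If `i` and `j` have the same
parity, color by parity. Otherwise keep the even states and send an odd `a` to `i + j - a`;
this identifies `i` with `j`, and `Q₁`, `Q₂` act on the colors as the reflections
`u ↦ i + j ± 1 - u`.
-/

section Coloring

variable {n m : ℕ} {K : Type*}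

theorem eq_foldl_of_pos_prod_apply {ι : Type*} {M : ι → Matrix (Fin n) (Fin n) ℕ}
    (C : Fin n → K) (σ : ι → K → K) (hC : ∀ ℓ a b, 0 < M ℓ a b → C b = σ ℓ (C a))
    (w : List ι) (a b : Fin n) (h : 0 < (w.map M).prod a b) :
    C b = w.foldl (fun k ℓ => σ ℓ k) (C a) := by
  induction w generalizing a with
  | nil =>
    rw [List.map_nil, List.prod_nil, Matrix.one_apply] at h
    split_ifs at h with hab
    · rw [hab, List.foldl_nil]
    · exact absurd h (lt_irrefl 0)
  | cons ℓ w ih =>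
    rw [List.map_cons, List.prod_cons, Matrix.mul_apply, Finset.sum_pos_iff] at h
    obtain ⟨d, -, hd⟩ := h
    rw [CanonicallyOrderedAdd.mul_pos] at hd
    rw [List.foldl_cons, ih d hd.2, hC ℓ a d hd.1]

theorem not_isPrimitive_of_coloring {M : Fin m → Matrix (Fin n) (Fin n) ℕ}
    (C : Fin n → K) (σ : Fin m → K → K) (hC : ∀ ℓ a b, 0 < M ℓ a b → C b = σ ℓ (C a))
    {b b' : Fin n} (hbb' : C b ≠ C b') : ¬ IsPrimitive M := by
  rintro ⟨w, -, hpos⟩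
  exact hbb' <| (eq_foldl_of_pos_prod_apply C σ hC w b b (hpos b b)).trans
    (eq_foldl_of_pos_prod_apply C σ hC w b b' (hpos b b')).symm

theorem eq_or_of_pos_one_add_single_apply {i j a b : Fin n}
    (h : 0 < (1 + Matrix.single i j 1 : Matrix (Fin n) (Fin n) ℕ) a b) :
    a = b ∨ a = i ∧ b = j := by
  rw [Matrix.add_apply, Matrix.one_apply, Matrix.single_apply] at h
  split_ifs at h with hab hij <;> simp_all

theorem not_isPrimitive_one_add_single_of_coloring {i j : Fin n}
    {P Q : Matrix (Fin n) (Fin n) ℕ} (C : Fin n → K) (f g : K → K) (hij : C i = C j)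
    (hP : ∀ a b, 0 < P a b → C b = f (C a)) (hQ : ∀ a b, 0 < Q a b → C b = g (C a))
    {b b' : Fin n} (hbb' : C b ≠ C b') :
    ¬ IsPrimitive ![1 + Matrix.single i j 1, P, Q] := by
  refine not_isPrimitive_of_coloring C ![id, f, g] ?_ hbb'
  intro ℓ a b h
  fin_cases ℓ
  · rcases eq_or_of_pos_one_add_single_apply h with rfl | ⟨rfl, rfl⟩
    exacts [rfl, hij.symm]
  · exact hP a b h
  · exact hQ a b h

end Coloring

section Dihedral

variable {n : ℕ} {a b : Fin n}

theorem matOfFun_pos_iff {f : ℕ → ℕ} : 0 < matOfFun n f a b ↔ f (a + 1) = b + 1 := by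
  simp only [matOfFun, Matrix.of_apply]
  split_ifs <;> simp_all

theorem Q1mat_pos (heven : Even n) (h : 0 < Q1mat n a b) :
    (Even (b : ℕ) ↔ ¬ Even (a : ℕ)) ∧
      ((b : ℕ) : ZMod n) = (a : ℕ) + if Even (a : ℕ) then -1 else 1 := by
  rw [Q1mat, matOfFun_pos_iff] at h
  have hn : ((n : ℕ) : ZMod n) = 0 := ZMod.natCast_self n
  have hcast {x y : ℕ} (h : x = y) : (x : ZMod n) = y := congrArg _ h
  have ha := a.isLt
  simp only [Nat.even_iff] at *
  refine ⟨by split_ifs at h <;> omega, ?_⟩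
  split_ifs at h with h1 h2 h3
  · rw [if_pos (by omega)]
    linear_combination (norm := (push_cast; ring1)) hcast (show (b : ℕ) + 1 = n + a by omega) + hn
  · rw [if_neg (by omega)]
    linear_combination (norm := (push_cast; ring1)) hcast (show (b : ℕ) + n = a + 1 by omega) - hn
  · rw [if_neg (by omega)]
    linear_combination (norm := (push_cast; ring1)) hcast (show (b : ℕ) = a + 1 by omega)
  · rw [if_pos (by omega)]
    linear_combination (norm := (push_cast; ring1)) hcast (show (b : ℕ) + 1 = a by omega)

theorem Q2mat_pos (h : 0 < Q2mat n a b) :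
    (Even (b : ℕ) ↔ ¬ Even (a : ℕ)) ∧
      ((b : ℕ) : ZMod n) = (a : ℕ) + if Even (a : ℕ) then 1 else -1 := by
  rw [Q2mat, matOfFun_pos_iff] at h
  have hcast {x y : ℕ} (h : x = y) : (x : ZMod n) = y := congrArg _ h
  have ha := a.isLt
  simp only [Nat.even_iff] at *
  refine ⟨by split_ifs at h <;> omega, ?_⟩
  split_ifs at h with h1
  · rw [if_neg (by omega)]
    linear_combination (norm := (push_cast; ring1)) hcast (show (b : ℕ) + 1 = a by omega)
  · rw [if_pos (by omega)]
    linear_combination (norm := (push_cast; ring1)) hcast (show (b : ℕ) = a + 1 by omega)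

end Dihedral

section Cases

variable {n : ℕ}

theorem not_isPrimitive_of_even_iff (heven : Even n) (hn : 2 ≤ n) {i j : Fin n}
    (hij : Even (i : ℕ) ↔ Even (j : ℕ)) :
    ¬ IsPrimitive ![1 + Matrix.single i j 1, Q1mat n, Q2mat n] :=
  not_isPrimitive_one_add_single_of_coloring (fun a : Fin n => Even (a : ℕ)) Not Not
    (propext hij) (fun _ _ h => propext (Q1mat_pos heven h).1)
    (fun _ _ h => propext (Q2mat_pos h).1) (b := ⟨0, by omega⟩) (b' := ⟨1, by omega⟩)
    (by simp)

def evenOddFold (c : ZMod n) (a : Fin n) : ZMod n :=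
  if Even (a : ℕ) then (a : ℕ) else c - (a : ℕ)

theorem evenOddFold_of_Q1mat_pos (heven : Even n) (c : ZMod n) {a b : Fin n}
    (h : 0 < Q1mat n a b) : evenOddFold c b = c + 1 - evenOddFold c a := by
  obtain ⟨hpar, hb⟩ := Q1mat_pos heven h
  simp only [evenOddFold, hpar, hb]
  split_ifs <;> ring

theorem evenOddFold_of_Q2mat_pos (c : ZMod n) {a b : Fin n}
    (h : 0 < Q2mat n a b) : evenOddFold c b = c - 1 - evenOddFold c a := by
  obtain ⟨hpar, hb⟩ := Q2mat_pos h
  simp only [evenOddFold, hpar, hb]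
  split_ifs <;> ring

theorem not_isPrimitive_of_not_even_iff (hn : 4 ≤ n) (heven : Even n) {i j : Fin n}
    (hij : ¬ Even (i : ℕ) ↔ Even (j : ℕ)) :
    ¬ IsPrimitive ![1 + Matrix.single i j 1, Q1mat n, Q2mat n] := by
  set c : ZMod n := ((i : ℕ) : ZMod n) + (j : ℕ)
  refine not_isPrimitive_one_add_single_of_coloring (evenOddFold c)
    (fun u => c + 1 - u) (fun u => c - 1 - u) ?_ (fun _ _ => evenOddFold_of_Q1mat_pos heven c)
    (fun _ _ => evenOddFold_of_Q2mat_pos c) (b := ⟨0, by omega⟩) (b' := ⟨2, by omega⟩) ?_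
  · unfold evenOddFold
    by_cases hi : Even (i : ℕ)
    · rw [if_pos hi, if_neg fun hj => hij.mpr hj hi]
      ring
    · rw [if_neg hi, if_pos (hij.mp hi)]
      ring
  · simp only [evenOddFold, Even.zero, even_two, if_true]
    rw [Ne, ZMod.natCast_eq_natCast_iff', Nat.zero_mod, Nat.mod_eq_of_lt (by omega)]
    decide

end Cases

theorem stmt15_general (n : ℕ) (hn : 4 ≤ n) (heven : Even n) (i j : Fin n) :
    ¬ IsPrimitive
      ![(1 : Matrix (Fin n) (Fin n) ℕ) + Matrix.single i j 1,
        Q1mat n, Q2mat n] := by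
  by_cases hij : Even (i : ℕ) ↔ Even (j : ℕ)
  · exact not_isPrimitive_of_even_iff heven (by omega) hij
  · exact not_isPrimitive_of_not_even_iff hn heven (not_iff.mp hij)

/-- For `n ≥ 4` even and any `i ≠ j`, the set `{I + I_{i,j}, Q₁, Q₂}` (with `Q₁, Q₂` of
the second form (saus2) above) is never primitive. -/
theorem stmt15 (n : ℕ) (hn : 4 ≤ n) (heven : Even n) (i j : Fin n) (hij : i ≠ j) :
    ¬ IsPrimitive
      ![(1 : Matrix (Fin n) (Fin n) ℕ) + Matrix.single i j 1,
        Q1mat n, Q2mat n] :=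
  stmt15_general n hn heven i j
end
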